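/- arXiv:1604.04475 — 10 statements merged into one kernel-verified Lean document; each statement's English description precedes it below -/
import Mathlib

section
/- Let A be a vector space with a trilinear bracket [.,.,.] satisfying the third 3-Leibniz identity: [x1,x2,[y1,y2,y3]] = [[x1,x2,y1],y2,y3] + [y1,[x1,x2,y2],y3] + [y1,y2,[x1,x2,y3]]. Then the space g = A ⊗ A with the bracket [x1⊗x2, y1⊗y2] := [x1,x2,y1]⊗y2 + y1⊗[x1,x2,y2] is a left Leibniz algebra, i.e. [X,[Y,Z]] = [[X,Y],Z] + [Y,[X,Z]] for all X,Y,Z in g. -/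
/-!
Every operator `f x₁ x₂` is a derivation of `f`. The map `d ↦ d ⊗ 1 + 1 ⊗ d` sends commutators of
endomorphisms of `A` to commutators, and the bracket is `B (x₁ ⊗ x₂) = f x₁ x₂ ⊗ 1 + 1 ⊗ f x₁ x₂`.
Hence for a derivation `d` of `f`, checking on pure tensors `Y = y₁ ⊗ y₂` via
`⁅d, f y₁ y₂⁆ = f (d y₁) y₂ + f y₁ (d y₂)` gives `⁅d ⊗ 1 + 1 ⊗ d, B Y⁆ = B ((d ⊗ 1 + 1 ⊗ d) Y)`.
Taking `d = f x₁ x₂` yields `⁅B X, B Y⁆ = B (B X Y)`, which is the left Leibniz identity.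
-/

open TensorProduct

namespace TripleLeibniz

attribute [local instance] LieRing.ofAssociativeRing

variable {K A : Type*} [CommRing K] [AddCommGroup A] [Module K A]

variable (K A) in
def rlTensor : Module.End K A →ₗ[K] Module.End K (A ⊗[K] A) :=
  LinearMap.rTensorHom A + LinearMap.lTensorHom A

@[simp]
theorem rlTensor_tmul (d : Module.End K A) (a b : A) :
    rlTensor K A d (a ⊗ₜ b) = d a ⊗ₜ b + a ⊗ₜ d b :=
  rfl

theorem rlTensor_lie (d e : Module.End K A) :
    ⁅rlTensor K A d, rlTensor K A e⁆ = rlTensor K A ⁅d, e⁆ := by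
  refine TensorProduct.ext' fun a b => ?_
  simp only [Ring.lie_def, LinearMap.sub_apply, Module.End.mul_apply, rlTensor_tmul, map_add,
    map_sub]
  abel

def IsDerivation (f : A →ₗ[K] A →ₗ[K] A →ₗ[K] A) (d : Module.End K A) : Prop :=
  ∀ a b c, d (f a b c) = f (d a) b c + f a (d b) c + f a b (d c)

theorem IsDerivation.lie_eq {f : A →ₗ[K] A →ₗ[K] A →ₗ[K] A} {d : Module.End K A}
    (hd : IsDerivation f d) (a b : A) : ⁅d, (f a b : Module.End K A)⁆ = f (d a) b + f a (d b) := by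
  ext c
  simp only [Ring.lie_def, LinearMap.sub_apply, Module.End.mul_apply, LinearMap.add_apply]
  rw [hd]
  abel

def tensorBracket (f : A →ₗ[K] A →ₗ[K] A →ₗ[K] A) :
    A ⊗[K] A →ₗ[K] Module.End K (A ⊗[K] A) :=
  TensorProduct.lift (f.compr₂ (rlTensor K A))

@[simp]
theorem tensorBracket_tmul (f : A →ₗ[K] A →ₗ[K] A →ₗ[K] A) (x₁ x₂ : A) :
    tensorBracket f (x₁ ⊗ₜ x₂) = rlTensor K A (f x₁ x₂) :=
  rfl

theorem IsDerivation.lie_tensorBracket {f : A →ₗ[K] A →ₗ[K] A →ₗ[K] A} {d : Module.End K A}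
    (hd : IsDerivation f d) (Y : A ⊗[K] A) :
    ⁅rlTensor K A d, tensorBracket f Y⁆ = tensorBracket f (rlTensor K A d Y) := by
  induction Y using TensorProduct.induction_on with
  | zero => simp
  | add Y₁ Y₂ h₁ h₂ => simp only [map_add, lie_add, h₁, h₂]
  | tmul y₁ y₂ =>
    rw [tensorBracket_tmul, rlTensor_lie, hd.lie_eq, rlTensor_tmul, map_add, map_add,
      tensorBracket_tmul, tensorBracket_tmul]

theorem lie_tensorBracket {f : A →ₗ[K] A →ₗ[K] A →ₗ[K] A}
    (hf : ∀ x₁ x₂, IsDerivation f (f x₁ x₂)) (X Y : A ⊗[K] A) :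
    ⁅tensorBracket f X, tensorBracket f Y⁆ = tensorBracket f (tensorBracket f X Y) := by
  induction X using TensorProduct.induction_on with
  | zero => simp
  | add X₁ X₂ h₁ h₂ => simp only [map_add, add_lie, LinearMap.add_apply, h₁, h₂]
  | tmul x₁ x₂ => exact (hf x₁ x₂).lie_tensorBracket Y

end TripleLeibniz

open TripleLeibniz in
/-- If a trilinear bracket on `A` satisfies the third 3-Leibniz identity,
then `A ⊗ A` with the bracket `[x1⊗x2, y1⊗y2] = [x1,x2,y1]⊗y2 + y1⊗[x1,x2,y2]`
is a left Leibniz algebra. -/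
theorem third_3Leibniz_associated_left_Leibniz
    {K A : Type*} [Field K] [AddCommGroup A] [Module K A]
    (f : A →ₗ[K] A →ₗ[K] A →ₗ[K] A)
    (h3 : ∀ x1 x2 y1 y2 y3 : A,
      f x1 x2 (f y1 y2 y3) =
        f (f x1 x2 y1) y2 y3 + f y1 (f x1 x2 y2) y3 + f y1 y2 (f x1 x2 y3)) :
    ∃ B : (A ⊗[K] A) →ₗ[K] (A ⊗[K] A) →ₗ[K] (A ⊗[K] A),
      (∀ x1 x2 y1 y2 : A,
        B (x1 ⊗ₜ[K] x2) (y1 ⊗ₜ[K] y2) =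
          (f x1 x2 y1) ⊗ₜ[K] y2 + y1 ⊗ₜ[K] (f x1 x2 y2)) ∧
      (∀ X Y Z : A ⊗[K] A, B X (B Y Z) = B (B X Y) Z + B Y (B X Z)) := by
  refine ⟨tensorBracket f, fun _ _ _ _ => rfl, fun X Y Z => ?_⟩
  have hL := LinearMap.congr_fun (lie_tensorBracket h3 X Y) Z
  rw [Ring.lie_def, LinearMap.sub_apply, Module.End.mul_apply, Module.End.mul_apply] at hL
  exact sub_eq_iff_eq_add.mp hL
end

section
/- Let A be a vector space with a trilinear bracket satisfying the first 3-Leibniz identity: [[y1,y2,y3],x2,x3] = [[y1,x2,x3],y2,y3] + [y1,[y2,x2,x3],y3] + [y1,y2,[y3,x2,x3]]. Then g = A ⊗ A with the bracket [x1⊗x2, y1⊗y2] := [x1,y1,y2]⊗x2 + x1⊗[x2,y1,y2] is a right Leibniz algebra, i.e. [[X,Y],Z] = [[X,Z],Y] + [X,[Y,Z]] for all X,Y,Z. -/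
/-!
For `y = y₁ ⊗ y₂` let `R y = f (·) y₁ y₂ ∈ End A`. Then `End A` acts on `A ⊗ A` as on a tensor
product of Lie modules, `g · (x₁ ⊗ x₂) = g x₁ ⊗ x₂ + x₁ ⊗ g x₂`, and the bracket in question is
`[X, Y] = R Y · X`. The 3-Leibniz identity says precisely that `R (R Z · Y) = ⁅R Z, R Y⁆`, i.e.
that `R` is an embedding tensor, and for any embedding tensor the Jacobi identity of the action
turns into the right Leibniz identity of the induced bracket.
-/

open TensorProduct

namespace LieModule

variable {R L M : Type*} [CommRing R] [LieRing L] [LieAlgebra R L] [AddCommGroup M] [Module R M]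
  [LieRingModule L M] [LieModule R L M]

def IsEmbeddingTensor (φ : M →ₗ[R] L) : Prop :=
  ∀ m n : M, φ ⁅φ m, n⁆ = ⁅φ m, φ n⁆

def embeddingTensorBracket (φ : M →ₗ[R] L) : M →ₗ[R] M →ₗ[R] M :=
  ((toEnd R L M : L →ₗ[R] Module.End R M) ∘ₗ φ).flip

@[simp]
lemma embeddingTensorBracket_apply (φ : M →ₗ[R] L) (m n : M) :
    embeddingTensorBracket φ m n = ⁅φ n, m⁆ :=
  rfl

theorem IsEmbeddingTensor.embeddingTensorBracket_right_leibniz {φ : M →ₗ[R] L}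
    (hφ : IsEmbeddingTensor φ) (X Y Z : M) :
    embeddingTensorBracket φ (embeddingTensorBracket φ X Y) Z =
      embeddingTensorBracket φ (embeddingTensorBracket φ X Z) Y +
        embeddingTensorBracket φ X (embeddingTensorBracket φ Y Z) := by
  simp only [embeddingTensorBracket_apply, hφ Z Y, leibniz_lie (φ Z) (φ Y) X]
  exact add_comm _ _

end LieModule

attribute [local instance] LieRing.ofAssociativeRing

section RightMul

variable {K A : Type*} [CommRing K] [AddCommGroup A] [Module K A]

def rightMul (f : A →ₗ[K] A →ₗ[K] A →ₗ[K] A) : A ⊗[K] A →ₗ[K] Module.End K A :=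
  (uncurry (RingHom.id K) A A A ∘ₗ f).flip

@[simp]
lemma rightMul_tmul_apply (f : A →ₗ[K] A →ₗ[K] A →ₗ[K] A) (y₁ y₂ x : A) :
    rightMul f (y₁ ⊗ₜ y₂) x = f x y₁ y₂ :=
  rfl

theorem isEmbeddingTensor_rightMul (f : A →ₗ[K] A →ₗ[K] A →ₗ[K] A)
    (hf : ∀ y1 y2 y3 x2 x3 : A,
      f (f y1 y2 y3) x2 x3 =
        f (f y1 x2 x3) y2 y3 + f y1 (f y2 x2 x3) y3 + f y1 y2 (f y3 x2 x3)) :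
    LieModule.IsEmbeddingTensor (rightMul f) := by
  intro Z Y
  induction Z using TensorProduct.induction_on with
  | zero => simp
  | add Z₁ Z₂ h₁ h₂ => simp only [map_add, add_lie, h₁, h₂]
  | tmul z₁ z₂ =>
    induction Y using TensorProduct.induction_on with
    | zero => simp
    | add Y₁ Y₂ h₁ h₂ => simp only [map_add, lie_add, h₁, h₂]
    | tmul y₁ y₂ =>
      ext x
      simp only [LieModule.lie_tmul_right, Module.End.lie_apply, map_add, LinearMap.add_apply,
        Ring.lie_def, LinearMap.sub_apply, Module.End.mul_apply, rightMul_tmul_apply]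
      rw [hf x y₁ y₂ z₁ z₂]
      abel

end RightMul

/-- If a trilinear bracket on `A` satisfies the first 3-Leibniz identity,
then `A ⊗ A` with the bracket `[x1⊗x2, y1⊗y2] = [x1,y1,y2]⊗x2 + x1⊗[x2,y1,y2]`
is a right Leibniz algebra. -/
theorem first_3Leibniz_associated_right_Leibniz
    {K A : Type*} [Field K] [AddCommGroup A] [Module K A]
    (f : A →ₗ[K] A →ₗ[K] A →ₗ[K] A)
    (h1 : ∀ y1 y2 y3 x2 x3 : A,
      f (f y1 y2 y3) x2 x3 =
        f (f y1 x2 x3) y2 y3 + f y1 (f y2 x2 x3) y3 + f y1 y2 (f y3 x2 x3)) :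
    ∃ B : (A ⊗[K] A) →ₗ[K] (A ⊗[K] A) →ₗ[K] (A ⊗[K] A),
      (∀ x1 x2 y1 y2 : A,
        B (x1 ⊗ₜ[K] x2) (y1 ⊗ₜ[K] y2) =
          (f x1 y1 y2) ⊗ₜ[K] x2 + x1 ⊗ₜ[K] (f x2 y1 y2)) ∧
      (∀ X Y Z : A ⊗[K] A, B (B X Y) Z = B (B X Z) Y + B X (B Y Z)) :=
  ⟨LieModule.embeddingTensorBracket (rightMul f), fun _ _ _ _ => by simp,
    (isEmbeddingTensor_rightMul f h1).embeddingTensorBracket_right_leibniz⟩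
end

section
/- Let A be a vector space with a trilinear bracket satisfying the second 3-Leibniz identity: [x1,[y1,y2,y3],x3] = [[x1,y1,x3],y2,y3] + [y1,[x1,y2,x3],y3] + [y1,y2,[x1,y3,x3]]. Then g = A ⊗ A with the bracket [x1⊗x2, y1⊗y2] := [x1,y1,x2]⊗y2 + y1⊗[x1,y2,x2] is a left Leibniz algebra. -/
/-!
The left Leibniz identity says that every left multiplication `[X, -]` on `A ⊗ A` is a derivation
of the bracket. For `X = x₁ ⊗ x₂` this operator is `D ⊗ 1 + 1 ⊗ D` with `D = [x₁, -, x₂]`, and the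
second 3-Leibniz identity says precisely that `D` is a derivation of the ternary bracket on `A`;
such a `D` extends to a derivation `D ⊗ 1 + 1 ⊗ D` of the induced bracket on `A ⊗ A`.
-/

open TensorProduct

namespace TernaryBracket

variable {R A : Type*} [CommSemiring R] [AddCommMonoid A] [Module R A]

def derivTensor (D : Module.End R A) : Module.End R (A ⊗[R] A) :=
  D.rTensor A + D.lTensor A

@[simp]
theorem derivTensor_tmul (D : Module.End R A) (a b : A) :
    derivTensor D (a ⊗ₜ[R] b) = D a ⊗ₜ b + a ⊗ₜ D b :=
  rfl

def tensorBracket (f : A →ₗ[R] A →ₗ[R] A →ₗ[R] A) :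
    A ⊗[R] A →ₗ[R] A ⊗[R] A →ₗ[R] A ⊗[R] A :=
  lift <| (LinearMap.lflip.toLinearMap ∘ₗ f).compr₂
    (LinearMap.rTensorHom A + LinearMap.lTensorHom A)

variable (f : A →ₗ[R] A →ₗ[R] A →ₗ[R] A)

theorem tensorBracket_tmul (x₁ x₂ : A) :
    tensorBracket f (x₁ ⊗ₜ[R] x₂) = derivTensor ((f x₁).flip x₂) := by
  simp [tensorBracket, derivTensor]

theorem tensorBracket_tmul_tmul (x₁ x₂ y₁ y₂ : A) :
    tensorBracket f (x₁ ⊗ₜ[R] x₂) (y₁ ⊗ₜ[R] y₂) = f x₁ y₁ x₂ ⊗ₜ y₂ + y₁ ⊗ₜ f x₁ y₂ x₂ := by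
  rw [tensorBracket_tmul, derivTensor_tmul]
  rfl

theorem derivTensor_tensorBracket {D : Module.End R A}
    (hD : ∀ a b c, D (f a b c) = f (D a) b c + f a (D b) c + f a b (D c)) (Y Z : A ⊗[R] A) :
    derivTensor D (tensorBracket f Y Z) =
      tensorBracket f (derivTensor D Y) Z + tensorBracket f Y (derivTensor D Z) := by
  induction Y using TensorProduct.induction_on with
  | zero => simp
  | add Y Y' hY hY' => simp only [map_add, LinearMap.add_apply, hY, hY']; abel
  | tmul y₁ y₂ =>
    induction Z using TensorProduct.induction_on with
    | zero => simp
    | add Z Z' hZ hZ' => simp only [map_add, hZ, hZ']; abel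
    | tmul z₁ z₂ =>
      simp only [tensorBracket_tmul_tmul, derivTensor_tmul, map_add, LinearMap.add_apply, hD,
        add_tmul, tmul_add]
      abel

end TernaryBracket

open TernaryBracket in
/-- If a trilinear bracket on `A` satisfies the second 3-Leibniz identity,
then `A ⊗ A` with the bracket `[x1⊗x2, y1⊗y2] = [x1,y1,x2]⊗y2 + y1⊗[x1,y2,x2]`
is a left Leibniz algebra. -/
theorem second_3Leibniz_associated_left_Leibniz
    {K A : Type*} [Field K] [AddCommGroup A] [Module K A]
    (f : A →ₗ[K] A →ₗ[K] A →ₗ[K] A)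
    (h2 : ∀ x1 y1 y2 y3 x3 : A,
      f x1 (f y1 y2 y3) x3 =
        f (f x1 y1 x3) y2 y3 + f y1 (f x1 y2 x3) y3 + f y1 y2 (f x1 y3 x3)) :
    ∃ B : (A ⊗[K] A) →ₗ[K] (A ⊗[K] A) →ₗ[K] (A ⊗[K] A),
      (∀ x1 x2 y1 y2 : A,
        B (x1 ⊗ₜ[K] x2) (y1 ⊗ₜ[K] y2) =
          (f x1 y1 x2) ⊗ₜ[K] y2 + y1 ⊗ₜ[K] (f x1 y2 x2)) ∧
      (∀ X Y Z : A ⊗[K] A, B X (B Y Z) = B (B X Y) Z + B Y (B X Z)) := by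
  refine ⟨tensorBracket f, tensorBracket_tmul_tmul f, fun X Y Z => ?_⟩
  induction X using TensorProduct.induction_on with
  | zero => simp
  | add X X' hX hX' => simp only [map_add, LinearMap.add_apply, hX, hX']; abel
  | tmul x₁ x₂ =>
    rw [tensorBracket_tmul]
    exact derivTensor_tensorBracket f (fun a b c => h2 x₁ a b c x₂) Y Z
end

section
/- Let A be a vector space with a trilinear bracket satisfying the second 3-Leibniz identity: [x1,[y1,y2,y3],x3] = [[x1,y1,x3],y2,y3] + [y1,[x1,y2,x3],y3] + [y1,y2,[x1,y3,x3]]. Then g = A ⊗ A with the bracket [x1⊗x2, y1⊗y2] := [y1,x1,y2]⊗x2 + x1⊗[y1,x2,y2] is a right Leibniz algebra. -/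
/-!
For fixed `a, c` the operator `b ↦ [a, b, c]` is, by the second 3-Leibniz identity, a derivation
of the triple bracket. Right multiplication by `y₁ ⊗ y₂` in `A ⊗ A` is `δ ⊗ 1 + 1 ⊗ δ` for the
derivation `δ = [y₁, ·, y₂]`, and `δ ⊗ 1 + 1 ⊗ δ` is a derivation of the bracket on `A ⊗ A`
whenever `δ` is a derivation of the triple bracket. Right multiplications being derivations is
precisely the right Leibniz identity.
-/

open TensorProduct

namespace TrilinearBracket

variable {R A : Type*} [CommSemiring R] [AddCommMonoid A] [Module R A]

def IsDerivation (f : A →ₗ[R] A →ₗ[R] A →ₗ[R] A) (δ : A →ₗ[R] A) : Prop :=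
  ∀ a b c, δ (f a b c) = f (δ a) b c + f a (δ b) c + f a b (δ c)

/-- `innerDerivation f a c` is the operator `b ↦ f a b c`. -/
def innerDerivation (f : A →ₗ[R] A →ₗ[R] A →ₗ[R] A) : A →ₗ[R] A →ₗ[R] Module.End R A :=
  LinearMap.lflip.comp f

noncomputable def tensorBracket (f : A →ₗ[R] A →ₗ[R] A →ₗ[R] A) :
    A ⊗[R] A →ₗ[R] A ⊗[R] A →ₗ[R] A ⊗[R] A :=
  (lift ((innerDerivation f).compr₂ (LinearMap.rTensorHom A + LinearMap.lTensorHom A))).flip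

theorem tensorBracket_apply_tmul (f : A →ₗ[R] A →ₗ[R] A →ₗ[R] A) (X : A ⊗[R] A) (y₁ y₂ : A) :
    tensorBracket f X (y₁ ⊗ₜ y₂) =
      (innerDerivation f y₁ y₂).rTensor A X + (innerDerivation f y₁ y₂).lTensor A X :=
  rfl

theorem tensorBracket_tmul_tmul (f : A →ₗ[R] A →ₗ[R] A →ₗ[R] A) (x₁ x₂ y₁ y₂ : A) :
    tensorBracket f (x₁ ⊗ₜ x₂) (y₁ ⊗ₜ y₂) = f y₁ x₁ y₂ ⊗ₜ x₂ + x₁ ⊗ₜ f y₁ x₂ y₂ :=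
  rfl

theorem IsDerivation.tensorBracket {f : A →ₗ[R] A →ₗ[R] A →ₗ[R] A} {δ : A →ₗ[R] A}
    (hδ : IsDerivation f δ) (X Y : A ⊗[R] A) :
    (δ.rTensor A + δ.lTensor A) (tensorBracket f X Y) =
      tensorBracket f ((δ.rTensor A + δ.lTensor A) X) Y +
        tensorBracket f X ((δ.rTensor A + δ.lTensor A) Y) := by
  induction X using TensorProduct.induction_on with
  | zero => simp
  | add X₁ X₂ h₁ h₂ => simp only [map_add, LinearMap.add_apply, h₁, h₂]; abel
  | tmul x₁ x₂ =>
    induction Y using TensorProduct.induction_on with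
    | zero => simp
    | add Y₁ Y₂ h₁ h₂ => simp only [map_add, LinearMap.add_apply, h₁, h₂]; abel
    | tmul y₁ y₂ =>
      simp only [LinearMap.add_apply, LinearMap.rTensor_tmul, LinearMap.lTensor_tmul, map_add,
        tensorBracket_tmul_tmul, hδ _ _ _, add_tmul, tmul_add]
      abel

theorem isDerivation_innerDerivation_of_second_leibniz {f : A →ₗ[R] A →ₗ[R] A →ₗ[R] A}
    (h2 : ∀ x₁ y₁ y₂ y₃ x₃ : A,
      f x₁ (f y₁ y₂ y₃) x₃ = f (f x₁ y₁ x₃) y₂ y₃ + f y₁ (f x₁ y₂ x₃) y₃ + f y₁ y₂ (f x₁ y₃ x₃))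
    (a c : A) : IsDerivation f (innerDerivation f a c) :=
  fun _ _ _ ↦ h2 _ _ _ _ _

end TrilinearBracket

open TrilinearBracket in
/-- If a trilinear bracket on `A` satisfies the second 3-Leibniz identity,
then `A ⊗ A` with the bracket `[x1⊗x2, y1⊗y2] = [y1,x1,y2]⊗x2 + x1⊗[y1,x2,y2]`
is a right Leibniz algebra. -/
theorem second_3Leibniz_associated_right_Leibniz
    {K A : Type*} [Field K] [AddCommGroup A] [Module K A]
    (f : A →ₗ[K] A →ₗ[K] A →ₗ[K] A)
    (h2 : ∀ x1 y1 y2 y3 x3 : A,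
      f x1 (f y1 y2 y3) x3 =
        f (f x1 y1 x3) y2 y3 + f y1 (f x1 y2 x3) y3 + f y1 y2 (f x1 y3 x3)) :
    ∃ B : (A ⊗[K] A) →ₗ[K] (A ⊗[K] A) →ₗ[K] (A ⊗[K] A),
      (∀ x1 x2 y1 y2 : A,
        B (x1 ⊗ₜ[K] x2) (y1 ⊗ₜ[K] y2) =
          (f y1 x1 y2) ⊗ₜ[K] x2 + x1 ⊗ₜ[K] (f y1 x2 y2)) ∧
      (∀ X Y Z : A ⊗[K] A, B (B X Y) Z = B (B X Z) Y + B X (B Y Z)) := by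
  refine ⟨tensorBracket f, tensorBracket_tmul_tmul f, fun X Y Z ↦ ?_⟩
  induction Z using TensorProduct.induction_on with
  | zero => simp
  | add Z₁ Z₂ h₁ h₂ => simp only [map_add, LinearMap.add_apply, h₁, h₂]; abel
  | tmul z₁ z₂ =>
    simp only [tensorBracket_apply_tmul, ← LinearMap.add_apply]
    exact (isDerivation_innerDerivation_of_second_leibniz h2 z₁ z₂).tensorBracket X Y
end

section
/- Let A be a 3-Lie algebra and let ρᵢ: A×A → End(Vᵢ), i = 1,2,3, be representations of A. Define ρ: A×A → End(V1⊗V2⊗V3) by ρ(x1,x2)(v1⊗v2⊗v3) = ρ1(x1,x2)v1⊗v2⊗v3 + v1⊗ρ2(x1,x2)v2⊗v3 + v1⊗v2⊗ρ3(x1,x2)v3. Then ρ satisfies the identity [ρ(x1,x2), ρ(y1,y2)] = ρ([x1,x2,y1], y2) + ρ(y1, [x1,x2,y2]); i.e., ρ is a semi-representation of A on V1⊗V2⊗V3. -/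
/-!
On `V ⊗ W` the operators `a ⊗ 1` and `1 ⊗ b` commute, so `a ↦ a ⊗ 1 + 1 ⊗ b` turns commutators
into commutators: `[a ⊗ 1 + 1 ⊗ b, c ⊗ 1 + 1 ⊗ d] = [a, c] ⊗ 1 + 1 ⊗ [b, d]`. The first
identity of a representation is an identity about commutators only, so it survives the tensor
sum of two semi-representations; the diagonal action on `V1 ⊗ (V2 ⊗ V3)` is such a tensor sum,
taken twice.
-/

open TensorProduct

namespace LinearMap

variable {K V W : Type*} [CommRing K] [AddCommGroup V] [Module K V] [AddCommGroup W] [Module K W]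

theorem rTensor_add_lTensor_commutator (a c : V →ₗ[K] V) (b d : W →ₗ[K] W) :
    (a.rTensor W + b.lTensor V) ∘ₗ (c.rTensor W + d.lTensor V) -
        (c.rTensor W + d.lTensor V) ∘ₗ (a.rTensor W + b.lTensor V) =
      (a ∘ₗ c - c ∘ₗ a).rTensor W + (b ∘ₗ d - d ∘ₗ b).lTensor V := by
  simp only [comp_add, add_comp, rTensor_sub, lTensor_sub, rTensor_comp, lTensor_comp,
    rTensor_comp_lTensor, lTensor_comp_rTensor]
  abel

end LinearMap

section SemiRepresentation

variable {K A V W : Type*} [CommRing K] [AddCommGroup A] [Module K A]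
  [AddCommGroup V] [Module K V] [AddCommGroup W] [Module K W]

def IsSemiRepresentation (f : A →ₗ[K] A →ₗ[K] A →ₗ[K] A) (ρ : A →ₗ[K] A →ₗ[K] (V →ₗ[K] V)) :
    Prop :=
  ∀ x1 x2 y1 y2 : A,
    ρ x1 x2 ∘ₗ ρ y1 y2 - ρ y1 y2 ∘ₗ ρ x1 x2 = ρ (f x1 x2 y1) y2 + ρ y1 (f x1 x2 y2)

def tensorSum (ρ : A →ₗ[K] A →ₗ[K] (V →ₗ[K] V)) (σ : A →ₗ[K] A →ₗ[K] (W →ₗ[K] W)) :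
    A →ₗ[K] A →ₗ[K] (V ⊗[K] W →ₗ[K] V ⊗[K] W) :=
  ρ.compr₂ (LinearMap.rTensorHom W) + σ.compr₂ (LinearMap.lTensorHom V)

theorem tensorSum_apply (ρ : A →ₗ[K] A →ₗ[K] (V →ₗ[K] V)) (σ : A →ₗ[K] A →ₗ[K] (W →ₗ[K] W))
    (x y : A) : tensorSum ρ σ x y = (ρ x y).rTensor W + (σ x y).lTensor V :=
  rfl

theorem IsSemiRepresentation.tensorSum {f : A →ₗ[K] A →ₗ[K] A →ₗ[K] A}
    {ρ : A →ₗ[K] A →ₗ[K] (V →ₗ[K] V)} {σ : A →ₗ[K] A →ₗ[K] (W →ₗ[K] W)}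
    (hρ : IsSemiRepresentation f ρ) (hσ : IsSemiRepresentation f σ) :
    IsSemiRepresentation f (tensorSum ρ σ) := by
  intro x1 x2 y1 y2
  simp only [tensorSum_apply, LinearMap.rTensor_add_lTensor_commutator, hρ x1 x2 y1 y2,
    hσ x1 x2 y1 y2, LinearMap.rTensor_add, LinearMap.lTensor_add]
  abel

end SemiRepresentation

theorem tensor_of_representations_is_semi_representation_general
    {K A V1 V2 V3 : Type*} [Field K] [AddCommGroup A] [Module K A]
    [AddCommGroup V1] [Module K V1] [AddCommGroup V2] [Module K V2]
    [AddCommGroup V3] [Module K V3]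
    (f : A →ₗ[K] A →ₗ[K] A →ₗ[K] A)
    (ρ1 : A →ₗ[K] A →ₗ[K] (V1 →ₗ[K] V1))
    (ρ2 : A →ₗ[K] A →ₗ[K] (V2 →ₗ[K] V2))
    (ρ3 : A →ₗ[K] A →ₗ[K] (V3 →ₗ[K] V3))
    (h1a : ∀ x1 x2 y1 y2 : A,
      ρ1 x1 x2 ∘ₗ ρ1 y1 y2 - ρ1 y1 y2 ∘ₗ ρ1 x1 x2 =
        ρ1 (f x1 x2 y1) y2 + ρ1 y1 (f x1 x2 y2))
    (h2a : ∀ x1 x2 y1 y2 : A,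
      ρ2 x1 x2 ∘ₗ ρ2 y1 y2 - ρ2 y1 y2 ∘ₗ ρ2 x1 x2 =
        ρ2 (f x1 x2 y1) y2 + ρ2 y1 (f x1 x2 y2))
    (h3a : ∀ x1 x2 y1 y2 : A,
      ρ3 x1 x2 ∘ₗ ρ3 y1 y2 - ρ3 y1 y2 ∘ₗ ρ3 x1 x2 =
        ρ3 (f x1 x2 y1) y2 + ρ3 y1 (f x1 x2 y2)) :
    ∃ R : A →ₗ[K] A →ₗ[K]
        ((V1 ⊗[K] (V2 ⊗[K] V3)) →ₗ[K] (V1 ⊗[K] (V2 ⊗[K] V3))),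
      (∀ (x1 x2 : A) (v1 : V1) (v2 : V2) (v3 : V3),
        R x1 x2 (v1 ⊗ₜ[K] (v2 ⊗ₜ[K] v3)) =
          (ρ1 x1 x2 v1) ⊗ₜ[K] (v2 ⊗ₜ[K] v3) + v1 ⊗ₜ[K] ((ρ2 x1 x2 v2) ⊗ₜ[K] v3)
            + v1 ⊗ₜ[K] (v2 ⊗ₜ[K] (ρ3 x1 x2 v3))) ∧
      (∀ x1 x2 y1 y2 : A,
        R x1 x2 ∘ₗ R y1 y2 - R y1 y2 ∘ₗ R x1 x2 =
          R (f x1 x2 y1) y2 + R y1 (f x1 x2 y2)) := by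
  refine ⟨tensorSum ρ1 (tensorSum ρ2 ρ3), fun x1 x2 v1 v2 v3 => ?_,
    IsSemiRepresentation.tensorSum h1a (IsSemiRepresentation.tensorSum h2a h3a)⟩
  simp only [tensorSum_apply, LinearMap.add_apply, LinearMap.rTensor_tmul,
    LinearMap.lTensor_tmul, tmul_add, add_assoc]

/-- The diagonal tensor product of three representations of a 3-Lie
algebra is a semi-representation on `V1 ⊗ V2 ⊗ V3`, i.e. it satisfies the first
Kasymov identity. -/
theorem tensor_of_representations_is_semi_representation
    {K A V1 V2 V3 : Type*} [Field K] [AddCommGroup A] [Module K A]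
    [AddCommGroup V1] [Module K V1] [AddCommGroup V2] [Module K V2]
    [AddCommGroup V3] [Module K V3]
    (f : A →ₗ[K] A →ₗ[K] A →ₗ[K] A)
    (halt1 : ∀ x y : A, f x x y = 0)
    (halt2 : ∀ x y : A, f x y y = 0)
    (hfil : ∀ x1 x2 y1 y2 y3 : A,
      f x1 x2 (f y1 y2 y3) =
        f (f x1 x2 y1) y2 y3 + f y1 (f x1 x2 y2) y3 + f y1 y2 (f x1 x2 y3))
    (ρ1 : A →ₗ[K] A →ₗ[K] (V1 →ₗ[K] V1))
    (ρ2 : A →ₗ[K] A →ₗ[K] (V2 →ₗ[K] V2))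
    (ρ3 : A →ₗ[K] A →ₗ[K] (V3 →ₗ[K] V3))
    (h1skew : ∀ x y : A, ρ1 x y = - ρ1 y x)
    (h2skew : ∀ x y : A, ρ2 x y = - ρ2 y x)
    (h3skew : ∀ x y : A, ρ3 x y = - ρ3 y x)
    (h1a : ∀ x1 x2 y1 y2 : A,
      ρ1 x1 x2 ∘ₗ ρ1 y1 y2 - ρ1 y1 y2 ∘ₗ ρ1 x1 x2 =
        ρ1 (f x1 x2 y1) y2 + ρ1 y1 (f x1 x2 y2))
    (h2a : ∀ x1 x2 y1 y2 : A,
      ρ2 x1 x2 ∘ₗ ρ2 y1 y2 - ρ2 y1 y2 ∘ₗ ρ2 x1 x2 =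
        ρ2 (f x1 x2 y1) y2 + ρ2 y1 (f x1 x2 y2))
    (h3a : ∀ x1 x2 y1 y2 : A,
      ρ3 x1 x2 ∘ₗ ρ3 y1 y2 - ρ3 y1 y2 ∘ₗ ρ3 x1 x2 =
        ρ3 (f x1 x2 y1) y2 + ρ3 y1 (f x1 x2 y2))
    (h1b : ∀ x1 y1 y2 y3 : A,
      ρ1 x1 (f y1 y2 y3) =
        ρ1 y2 y3 ∘ₗ ρ1 x1 y1 - ρ1 y1 y3 ∘ₗ ρ1 x1 y2 + ρ1 y1 y2 ∘ₗ ρ1 x1 y3)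
    (h2b : ∀ x1 y1 y2 y3 : A,
      ρ2 x1 (f y1 y2 y3) =
        ρ2 y2 y3 ∘ₗ ρ2 x1 y1 - ρ2 y1 y3 ∘ₗ ρ2 x1 y2 + ρ2 y1 y2 ∘ₗ ρ2 x1 y3)
    (h3b : ∀ x1 y1 y2 y3 : A,
      ρ3 x1 (f y1 y2 y3) =
        ρ3 y2 y3 ∘ₗ ρ3 x1 y1 - ρ3 y1 y3 ∘ₗ ρ3 x1 y2 + ρ3 y1 y2 ∘ₗ ρ3 x1 y3) :
    ∃ R : A →ₗ[K] A →ₗ[K]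
        ((V1 ⊗[K] (V2 ⊗[K] V3)) →ₗ[K] (V1 ⊗[K] (V2 ⊗[K] V3))),
      (∀ (x1 x2 : A) (v1 : V1) (v2 : V2) (v3 : V3),
        R x1 x2 (v1 ⊗ₜ[K] (v2 ⊗ₜ[K] v3)) =
          (ρ1 x1 x2 v1) ⊗ₜ[K] (v2 ⊗ₜ[K] v3) + v1 ⊗ₜ[K] ((ρ2 x1 x2 v2) ⊗ₜ[K] v3)
            + v1 ⊗ₜ[K] (v2 ⊗ₜ[K] (ρ3 x1 x2 v3))) ∧
      (∀ x1 x2 y1 y2 : A,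
        R x1 x2 ∘ₗ R y1 y2 - R y1 y2 ∘ₗ R x1 x2 =
          R (f x1 x2 y1) y2 + R y1 (f x1 x2 y2)) :=
  tensor_of_representations_is_semi_representation_general f ρ1 ρ2 ρ3 h1a h2a h3a
end

section
/- In general, the diagonal tensor product action of a 3-Lie algebra representation fails to be a full representation: there exists a 3-Lie algebra A with representations ρᵢ on Vᵢ such that the induced semi-representation ρ on V1⊗V2⊗V3 does not satisfy ρ(x1,[y1,y2,y3]) = ρ(y2,y3)ρ(x1,y1) − ρ(y1,y3)ρ(x1,y2) + ρ(y1,y2)ρ(x1,y3). -/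
open TensorProduct

/-!
The cross product `[x, y, z] = cross x y z` on `ℝ⁴`, given by `⟪[x, y, z], w⟫ = det (x, y, z, w)`,
is a 3-Lie algebra, and `crossₗ x y = [x, y, ·]` is its adjoint representation. In the right-hand
side of the second Kasymov identity for the diagonal action `ad ⊗ 1 ⊗ 1 + 1 ⊗ ad ⊗ 1 + 1 ⊗ 1 ⊗ ad`,
the terms in which both operators act on the same tensor factor reassemble the left-hand side, but
the cross terms, acting on two different factors, remain. At `x₁ = e₀`,
`(y₁, y₂, y₃) = (e₁, e₂, e₃)` and `t = e₀ ⊗ e₀ ⊗ e₁` the left-hand side vanishes because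
`[e₁, e₂, e₃] = -e₀`, while the right-hand side is `e₃⊗e₀⊗e₂ + e₀⊗e₃⊗e₂ - e₂⊗e₀⊗e₃ - e₀⊗e₂⊗e₃ ≠ 0`.
-/

section DiagonalAction

variable {R A V₁ V₂ V₃ : Type*} [CommSemiring R] [AddCommMonoid A] [Module R A]
  [AddCommMonoid V₁] [Module R V₁] [AddCommMonoid V₂] [Module R V₂]
  [AddCommMonoid V₃] [Module R V₃]

noncomputable def diagonalTensorAction (ρ₁ : A →ₗ[R] A →ₗ[R] Module.End R V₁)
    (ρ₂ : A →ₗ[R] A →ₗ[R] Module.End R V₂) (ρ₃ : A →ₗ[R] A →ₗ[R] Module.End R V₃) :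
    A →ₗ[R] A →ₗ[R] Module.End R (V₁ ⊗[R] (V₂ ⊗[R] V₃)) :=
  ρ₁.compr₂ (LinearMap.rTensorHom _) +
    ρ₂.compr₂ ((LinearMap.lTensorHom _).comp (LinearMap.rTensorHom _)) +
    ρ₃.compr₂ ((LinearMap.lTensorHom _).comp (LinearMap.lTensorHom _))

@[simp]
lemma diagonalTensorAction_tmul (ρ₁ : A →ₗ[R] A →ₗ[R] Module.End R V₁)
    (ρ₂ : A →ₗ[R] A →ₗ[R] Module.End R V₂) (ρ₃ : A →ₗ[R] A →ₗ[R] Module.End R V₃)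
    (x y : A) (v₁ : V₁) (v₂ : V₂) (v₃ : V₃) :
    diagonalTensorAction ρ₁ ρ₂ ρ₃ x y (v₁ ⊗ₜ (v₂ ⊗ₜ v₃)) =
      ρ₁ x y v₁ ⊗ₜ (v₂ ⊗ₜ v₃) + v₁ ⊗ₜ (ρ₂ x y v₂ ⊗ₜ v₃) + v₁ ⊗ₜ (v₂ ⊗ₜ ρ₃ x y v₃) := by
  simp [diagonalTensorAction]

end DiagonalAction

def cross (x y z : Fin 4 → ℝ) : Fin 4 → ℝ :=
  ![-(x 1 * (y 2 * z 3 - y 3 * z 2) - x 2 * (y 1 * z 3 - y 3 * z 1)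
        + x 3 * (y 1 * z 2 - y 2 * z 1)),
     x 0 * (y 2 * z 3 - y 3 * z 2) - x 2 * (y 0 * z 3 - y 3 * z 0)
        + x 3 * (y 0 * z 2 - y 2 * z 0),
    -(x 0 * (y 1 * z 3 - y 3 * z 1) - x 1 * (y 0 * z 3 - y 3 * z 0)
        + x 3 * (y 0 * z 1 - y 1 * z 0)),
     x 0 * (y 1 * z 2 - y 2 * z 1) - x 1 * (y 0 * z 2 - y 2 * z 0)
        + x 2 * (y 0 * z 1 - y 1 * z 0)]

def crossₗ : (Fin 4 → ℝ) →ₗ[ℝ] (Fin 4 → ℝ) →ₗ[ℝ] (Fin 4 → ℝ) →ₗ[ℝ] (Fin 4 → ℝ) :=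
  LinearMap.mk₂ ℝ
    (fun x y =>
      { toFun := cross x y
        map_add' := fun _ _ => by funext l; fin_cases l <;> simp [cross] <;> ring
        map_smul' := fun _ _ => by funext l; fin_cases l <;> simp [cross] <;> ring })
    (fun _ _ _ => LinearMap.ext fun _ => by funext l; fin_cases l <;> simp [cross] <;> ring)
    (fun _ _ _ => LinearMap.ext fun _ => by funext l; fin_cases l <;> simp [cross] <;> ring)
    (fun _ _ _ => LinearMap.ext fun _ => by funext l; fin_cases l <;> simp [cross] <;> ring)
    (fun _ _ _ => LinearMap.ext fun _ => by funext l; fin_cases l <;> simp [cross] <;> ring)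

@[simp]
lemma crossₗ_apply (x y z : Fin 4 → ℝ) : crossₗ x y z = cross x y z := rfl

lemma cross_self_left (x y : Fin 4 → ℝ) : cross x x y = 0 := by
  funext l; fin_cases l <;> simp [cross] <;> ring

lemma crossₗ_self (x : Fin 4 → ℝ) : crossₗ x x = 0 :=
  LinearMap.ext (cross_self_left x)

lemma cross_self_right (x y : Fin 4 → ℝ) : cross x y y = 0 := by
  funext l; fin_cases l <;> simp [cross] <;> ring

lemma cross_fundamental_identity (x₁ x₂ y₁ y₂ y₃ : Fin 4 → ℝ) :
    cross x₁ x₂ (cross y₁ y₂ y₃) =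
      cross (cross x₁ x₂ y₁) y₂ y₃ + cross y₁ (cross x₁ x₂ y₂) y₃ +
        cross y₁ y₂ (cross x₁ x₂ y₃) := by
  funext l; fin_cases l <;> simp [cross] <;> ring

noncomputable def tensorCoord (i j k : Fin 4) :
    (Fin 4 → ℝ) ⊗[ℝ] ((Fin 4 → ℝ) ⊗[ℝ] (Fin 4 → ℝ)) →ₗ[ℝ] ℝ :=
  lift ((LinearMap.proj i).smulRight (lift ((LinearMap.proj j).smulRight (LinearMap.proj k))))

@[simp]
lemma tensorCoord_tmul (i j k : Fin 4) (a b c : Fin 4 → ℝ) :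
    tensorCoord i j k (a ⊗ₜ (b ⊗ₜ c)) = a i * (b j * c k) := by
  simp [tensorCoord]

noncomputable abbrev adjointTensorCube :
    (Fin 4 → ℝ) →ₗ[ℝ] (Fin 4 → ℝ) →ₗ[ℝ]
      Module.End ℝ ((Fin 4 → ℝ) ⊗[ℝ] ((Fin 4 → ℝ) ⊗[ℝ] (Fin 4 → ℝ))) :=
  diagonalTensorAction crossₗ crossₗ crossₗ

lemma adjointTensorCube_self (x : Fin 4 → ℝ) : adjointTensorCube x x = 0 := by
  simp [diagonalTensorAction, crossₗ_self]

lemma cross_single_one_two_three :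
    cross (Pi.single 1 1) (Pi.single 2 1) (Pi.single 3 1) = -Pi.single 0 1 := by
  funext l; fin_cases l <;> simp [cross]

lemma tensorCoord_adjointTensorCube_kasymov_rhs :
    let t : (Fin 4 → ℝ) ⊗[ℝ] ((Fin 4 → ℝ) ⊗[ℝ] (Fin 4 → ℝ)) :=
      Pi.single 0 1 ⊗ₜ (Pi.single 0 1 ⊗ₜ Pi.single 1 1)
    tensorCoord 2 0 3
      (adjointTensorCube (Pi.single 2 1) (Pi.single 3 1)
          (adjointTensorCube (Pi.single 0 1) (Pi.single 1 1) t) -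
        adjointTensorCube (Pi.single 1 1) (Pi.single 3 1)
          (adjointTensorCube (Pi.single 0 1) (Pi.single 2 1) t) +
        adjointTensorCube (Pi.single 1 1) (Pi.single 2 1)
          (adjointTensorCube (Pi.single 0 1) (Pi.single 3 1) t)) = -1 := by
  simp [cross]

/-- The diagonal tensor product action of a 3-Lie algebra representation
fails in general to be a full representation: there is a 3-Lie algebra (on `Fin 4 → ℝ`)
whose adjoint representations induce a diagonal semi-representation on the tensor cube
which does not satisfy the second Kasymov identity. -/
theorem diagonal_tensor_action_not_full_representation :
    ∃ f : (Fin 4 → ℝ) →ₗ[ℝ] (Fin 4 → ℝ) →ₗ[ℝ] (Fin 4 → ℝ) →ₗ[ℝ] (Fin 4 → ℝ),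
      (∀ x y : Fin 4 → ℝ, f x x y = 0) ∧
      (∀ x y : Fin 4 → ℝ, f x y y = 0) ∧
      (∀ x1 x2 y1 y2 y3 : Fin 4 → ℝ,
        f x1 x2 (f y1 y2 y3) =
          f (f x1 x2 y1) y2 y3 + f y1 (f x1 x2 y2) y3 + f y1 y2 (f x1 x2 y3)) ∧
      ∃ R : (Fin 4 → ℝ) →ₗ[ℝ] (Fin 4 → ℝ) →ₗ[ℝ]
          (((Fin 4 → ℝ) ⊗[ℝ] ((Fin 4 → ℝ) ⊗[ℝ] (Fin 4 → ℝ))) →ₗ[ℝ]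
            ((Fin 4 → ℝ) ⊗[ℝ] ((Fin 4 → ℝ) ⊗[ℝ] (Fin 4 → ℝ)))),
        (∀ x1 x2 v1 v2 v3 : Fin 4 → ℝ,
          R x1 x2 (v1 ⊗ₜ[ℝ] (v2 ⊗ₜ[ℝ] v3)) =
            (f x1 x2 v1) ⊗ₜ[ℝ] (v2 ⊗ₜ[ℝ] v3) + v1 ⊗ₜ[ℝ] ((f x1 x2 v2) ⊗ₜ[ℝ] v3)
              + v1 ⊗ₜ[ℝ] (v2 ⊗ₜ[ℝ] (f x1 x2 v3))) ∧
        ¬ (∀ (x1 y1 y2 y3 : Fin 4 → ℝ)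
              (t : (Fin 4 → ℝ) ⊗[ℝ] ((Fin 4 → ℝ) ⊗[ℝ] (Fin 4 → ℝ))),
            R x1 (f y1 y2 y3) t =
              R y2 y3 (R x1 y1 t) - R y1 y3 (R x1 y2 t) + R y1 y2 (R x1 y3 t)) := by
  refine ⟨crossₗ, cross_self_left, cross_self_right, cross_fundamental_identity,
    adjointTensorCube, diagonalTensorAction_tmul crossₗ crossₗ crossₗ, fun h => ?_⟩
  have key := congrArg (tensorCoord 2 0 3)
    (h (Pi.single 0 1) (Pi.single 1 1) (Pi.single 2 1) (Pi.single 3 1)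
      (Pi.single 0 1 ⊗ₜ (Pi.single 0 1 ⊗ₜ Pi.single 1 1)))
  rw [crossₗ_apply, cross_single_one_two_three, map_neg, adjointTensorCube_self,
    tensorCoord_adjointTensorCube_kasymov_rhs] at key
  norm_num at key
end

section
/- Let A be the 3-dimensional vector space over ℝ with basis e1,e2,e3 and trilinear bracket determined by [e2,e3,e3] = e1, [e3,e3,e3] = e2 (all other basis brackets zero). Then A is a first 3-Leibniz algebra, i.e. [[y1,y2,y3],x2,x3] = [[y1,x2,x3],y2,y3] + [y1,[y2,x2,x3],y3] + [y1,y2,[y3,x2,x3]] for all elements. -/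
/-! The bracket is `[u, v, w] = (v₃ w₃) • N u`, where `N` is the nilpotent shift `e₃ ↦ e₂ ↦ e₁ ↦ 0`
and `v₃` is the third coordinate. Any bracket of the form `[u, v, w] = (φ v * φ w) • g u` with
`φ ∘ g = 0` is a first 3-Leibniz algebra: brackets are killed by `φ`, so every bracket placed in a
middle or last slot vanishes, and the two remaining terms both equal `(φ x₂ φ x₃ φ y₂ φ y₃) • g (g y₁)`. -/

section FirstThreeLeibniz

variable {R M : Type*} [CommSemiring R] [AddCommMonoid M] [Module R M]

def IsFirstThreeLeibniz (f : M →ₗ[R] M →ₗ[R] M →ₗ[R] M) : Prop :=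
  ∀ y1 y2 y3 x2 x3 : M,
    f (f y1 y2 y3) x2 x3 = f (f y1 x2 x3) y2 y3 + f y1 (f y2 x2 x3) y3 + f y1 y2 (f y3 x2 x3)

def smulBracket (φ : M →ₗ[R] R) (g : M →ₗ[R] M) : M →ₗ[R] M →ₗ[R] M →ₗ[R] M :=
  (LinearMap.smulRightₗ φ ∘ₗ g).compr₂ (LinearMap.smulRightₗ φ)

@[simp]
theorem smulBracket_apply (φ : M →ₗ[R] R) (g : M →ₗ[R] M) (u v w : M) :
    smulBracket φ g u v w = (φ v * φ w) • g u := by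
  simp [smulBracket, mul_smul, smul_comm (φ v)]

theorem isFirstThreeLeibniz_smulBracket (φ : M →ₗ[R] R) (g : M →ₗ[R] M)
    (hφg : ∀ u, φ (g u) = 0) : IsFirstThreeLeibniz (smulBracket φ g) := by
  have hφ_bracket (u v w : M) : φ (smulBracket φ g u v w) = 0 := by
    rw [smulBracket_apply, map_smul, hφg, smul_zero]
  have hbracket_bracket (u v w x y : M) :
      smulBracket φ g (smulBracket φ g u v w) x y = (φ v * φ w * (φ x * φ y)) • g (g u) := by
    rw [smulBracket_apply, smulBracket_apply, map_smul, smul_smul, mul_comm]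
  intro y1 y2 y3 x2 x3
  rw [smulBracket_apply _ _ _ _ (smulBracket φ g y3 x2 x3),
    smulBracket_apply _ _ _ (smulBracket φ g y2 x2 x3), hφ_bracket, hφ_bracket,
    hbracket_bracket, hbracket_bracket]
  simp only [mul_zero, zero_mul, zero_smul, add_zero]
  rw [mul_comm]

end FirstThreeLeibniz

/-- The 3-dimensional real trilinear algebra with `[e2,e3,e3] = e1`,
`[e3,e3,e3] = e2` (all other basis brackets zero) is a first 3-Leibniz algebra. -/
theorem example_first_3Leibniz_dim3
    (f : (Fin 3 → ℝ) →ₗ[ℝ] (Fin 3 → ℝ) →ₗ[ℝ] (Fin 3 → ℝ) →ₗ[ℝ] (Fin 3 → ℝ))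
    (e : Fin 3 → (Fin 3 → ℝ)) (he : ∀ i : Fin 3, e i = Pi.single i 1)
    (hf : ∀ i j k : Fin 3,
      f (e i) (e j) (e k) =
        if i = 1 ∧ j = 2 ∧ k = 2 then e 0
        else if i = 2 ∧ j = 2 ∧ k = 2 then e 1
        else 0) :
    ∀ y1 y2 y3 x2 x3 : Fin 3 → ℝ,
      f (f y1 y2 y3) x2 x3 =
        f (f y1 x2 x3) y2 y3 + f y1 (f y2 x2 x3) y3 + f y1 y2 (f y3 x2 x3) := by
  set N : (Fin 3 → ℝ) →ₗ[ℝ] (Fin 3 → ℝ) :=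
    (LinearMap.proj 1).smulRight (e 0) + (LinearMap.proj 2).smulRight (e 1) with hN
  have hf_eq : f = smulBracket (LinearMap.proj 2) N := by
    refine (Pi.basisFun ℝ (Fin 3)).ext fun i => (Pi.basisFun ℝ (Fin 3)).ext fun j =>
      (Pi.basisFun ℝ (Fin 3)).ext fun k => ?_
    simp only [Pi.basisFun_apply, ← he, hf, smulBracket_apply, hN]
    fin_cases i <;> fin_cases j <;> fin_cases k <;> simp [he]
  rw [hf_eq]
  exact isFirstThreeLeibniz_smulBracket _ _ fun u => by simp [hN, he]
end

section
/- Let A be the 3-dimensional real vector space with basis e1,e2,e3 and trilinear bracket determined by [e3,e2,e3] = e2, [e3,e3,e2] = −e2, [e3,e3,e3] = e1 + e2 (all other basis brackets zero). Then A is a first 3-Leibniz algebra. -/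
/-!
The bracket has the closed form
`[a, b, c] = (a₃b₃c₃) e₁ + a₃ (b₂c₃ - b₃c₂ + b₃c₃) e₂`:
it lands in `span {e₁, e₂}` and sees its first argument only through `a₃`. Hence every bracket
with a bracket in the first slot vanishes, and the two remaining terms of the Leibniz identity
are `± y1₃ y2₃ y3₃ (x2₂x3₃ - x2₃x3₂ + x2₃x3₃) e₂`, which cancel.
(Indices here are the paper's; in `Fin 3` they start at `0`.)
-/

def IsFirstLeibniz3 {V : Type*} [Add V] (br : V → V → V → V) : Prop :=
  ∀ y1 y2 y3 x2 x3 : V,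
    br (br y1 y2 y3) x2 x3 = br (br y1 x2 x3) y2 y3 + br y1 (br y2 x2 x3) y3 + br y1 y2 (br y3 x2 x3)

theorem LinearMap.trilinear_pi_apply_eq_sum {R M ι : Type*} [CommSemiring R] [AddCommMonoid M]
    [Module R M] [Fintype ι] [DecidableEq ι]
    (f : (ι → R) →ₗ[R] (ι → R) →ₗ[R] (ι → R) →ₗ[R] M) (a b c : ι → R) :
    f a b c = ∑ i, ∑ j, ∑ k,
      (a i * b j * c k) • f (Pi.single i 1) (Pi.single j 1) (Pi.single k 1) := by
  have expand (x : ι → R) : x = ∑ i, x i • Pi.single i 1 := by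
    simpa using ((Pi.basisFun R ι).sum_repr x).symm
  conv_lhs =>
    rw [expand a]; simp only [map_sum, map_smul, LinearMap.sum_apply, LinearMap.smul_apply]
    rw [expand b]
    simp only [map_sum, map_smul, LinearMap.sum_apply, LinearMap.smul_apply, Finset.smul_sum]
    rw [expand c]; simp only [map_sum, map_smul, Finset.smul_sum, smul_smul]
  simp only [mul_assoc]

namespace Dim3Second

def bracket (a b c : Fin 3 → ℝ) : Fin 3 → ℝ :=
  ![a 2 * b 2 * c 2, a 2 * (b 1 * c 2 - b 2 * c 1 + b 2 * c 2), 0]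

theorem bracket_apply_two (a b c : Fin 3 → ℝ) : bracket a b c 2 = 0 := rfl

theorem bracket_eq_zero_of_apply_two {a : Fin 3 → ℝ} (ha : a 2 = 0) (b c : Fin 3 → ℝ) :
    bracket a b c = 0 := by
  ext t; fin_cases t <;> simp [bracket, ha]

theorem isFirstLeibniz3_bracket : IsFirstLeibniz3 bracket := by
  intro y1 y2 y3 x2 x3
  rw [bracket_eq_zero_of_apply_two (bracket_apply_two ..),
    bracket_eq_zero_of_apply_two (bracket_apply_two ..), zero_add]
  ext t; fin_cases t <;> simp [bracket]
  ring

end Dim3Second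

/-- The 3-dimensional real trilinear algebra with `[e3,e2,e3] = e2`,
`[e3,e3,e2] = -e2`, `[e3,e3,e3] = e1 + e2` (all other basis brackets zero) is a
first 3-Leibniz algebra. -/
theorem example_first_3Leibniz_dim3_second
    (f : (Fin 3 → ℝ) →ₗ[ℝ] (Fin 3 → ℝ) →ₗ[ℝ] (Fin 3 → ℝ) →ₗ[ℝ] (Fin 3 → ℝ))
    (e : Fin 3 → (Fin 3 → ℝ)) (he : ∀ i : Fin 3, e i = Pi.single i 1)
    (hf : ∀ i j k : Fin 3,
      f (e i) (e j) (e k) =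
        if i = 2 ∧ j = 1 ∧ k = 2 then e 1
        else if i = 2 ∧ j = 2 ∧ k = 1 then -(e 1)
        else if i = 2 ∧ j = 2 ∧ k = 2 then e 0 + e 1
        else 0) :
    ∀ y1 y2 y3 x2 x3 : Fin 3 → ℝ,
      f (f y1 y2 y3) x2 x3 =
        f (f y1 x2 x3) y2 y3 + f y1 (f y2 x2 x3) y3 + f y1 y2 (f y3 x2 x3) := by
  have hf_eq : ∀ a b c, f a b c = Dim3Second.bracket a b c := by
    intro a b c
    rw [LinearMap.trilinear_pi_apply_eq_sum]
    simp only [← he, hf]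
    ext t
    fin_cases t <;> simp [Fin.sum_univ_three, he, Dim3Second.bracket]
    ring
  intro y1 y2 y3 x2 x3
  simp only [hf_eq]
  exact Dim3Second.isFirstLeibniz3_bracket y1 y2 y3 x2 x3
end

section
/- Let A* be the 3-dimensional real vector space with basis ẽ1,ẽ2,ẽ3 and, for fixed nonzero reals a,b, trilinear bracket determined by [ẽ1,ẽ1,ẽ1] = b·ẽ2 + a·ẽ3 and [ẽ1,ẽ1,ẽ2] = b·ẽ3 (all other basis brackets zero). Then A* is a third 3-Leibniz algebra, i.e. satisfies [x1,x2,[y1,y2,y3]] = [[x1,x2,y1],y2,y3] + [y1,[x1,x2,y2],y3] + [y1,y2,[x1,x2,y3]]. -/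
/-!
A bracket of the shape `[x, y, z] = φ x • φ y • D z`, with `φ` a linear form and `D` an
endomorphism such that `φ ∘ D = 0`, satisfies the third Leibniz identity: the two terms with an
inner bracket in the first or second slot vanish, and the other two both equal
`φ x₁ φ x₂ φ y₁ φ y₂ • D² y₃`. The algebra `A*` has this shape, with `φ` the first coordinate
and `D` the map `ẽ1 ↦ b ẽ2 + a ẽ3`, `ẽ2 ↦ b ẽ3`, `ẽ3 ↦ 0`.
-/

open Matrix

theorem third_leibniz_of_eq_smul_smul {R M : Type*} [CommRing R] [AddCommGroup M] [Module R M]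
    (f : M → M → M → M) (φ : M →ₗ[R] R) (D : Module.End R M) (hφD : φ ∘ₗ D = 0)
    (hf : ∀ x y z, f x y z = φ x • φ y • D z) (x₁ x₂ y₁ y₂ y₃ : M) :
    f x₁ x₂ (f y₁ y₂ y₃) =
      f (f x₁ x₂ y₁) y₂ y₃ + f y₁ (f x₁ x₂ y₂) y₃ + f y₁ y₂ (f x₁ x₂ y₃) := by
  have hφ : ∀ z, φ (D z) = 0 := fun z => LinearMap.congr_fun hφD z
  simp only [hf, map_smul, hφ]
  module

theorem example_third_3Leibniz_dim3_general
    (a b : ℝ)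
    (f : (Fin 3 → ℝ) →ₗ[ℝ] (Fin 3 → ℝ) →ₗ[ℝ] (Fin 3 → ℝ) →ₗ[ℝ] (Fin 3 → ℝ))
    (e : Fin 3 → (Fin 3 → ℝ)) (he : ∀ i : Fin 3, e i = Pi.single i 1)
    (hf : ∀ i j k : Fin 3,
      f (e i) (e j) (e k) =
        if i = 0 ∧ j = 0 ∧ k = 0 then b • e 1 + a • e 2
        else if i = 0 ∧ j = 0 ∧ k = 1 then b • e 2
        else 0) :
    ∀ x1 x2 y1 y2 y3 : Fin 3 → ℝ,
      f x1 x2 (f y1 y2 y3) =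
        f (f x1 x2 y1) y2 y3 + f y1 (f x1 x2 y2) y3 + f y1 y2 (f x1 x2 y3) := by
  let φ : (Fin 3 → ℝ) →ₗ[ℝ] ℝ := LinearMap.proj 0
  let D : Module.End ℝ (Fin 3 → ℝ) := toLin' !![0, 0, 0; b, 0, 0; a, b, 0]
  have hφD : φ ∘ₗ D = 0 := by
    ext i
    fin_cases i <;> simp [φ, D, mulVec, dotProduct, Fin.sum_univ_three]
  have hfφD : f = φ.smulRight (φ.smulRight D) := by
    ext i j k l
    simp only [LinearMap.coe_comp, Function.comp_apply, LinearMap.coe_single, ← he, hf]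
    fin_cases i <;> fin_cases j <;> fin_cases k <;> fin_cases l <;>
      simp [he, φ, D, mulVec, dotProduct, Fin.sum_univ_three]
  exact third_leibniz_of_eq_smul_smul (f · · ·) φ D hφD fun x y z => by rw [hfφD]; rfl

/-- For nonzero reals `a`, `b`, the 3-dimensional real trilinear algebra
with `[ẽ1,ẽ1,ẽ1] = b·ẽ2 + a·ẽ3` and `[ẽ1,ẽ1,ẽ2] = b·ẽ3` (all other basis brackets
zero) is a third 3-Leibniz algebra. -/
theorem example_third_3Leibniz_dim3
    (a b : ℝ) (ha : a ≠ 0) (hb : b ≠ 0)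
    (f : (Fin 3 → ℝ) →ₗ[ℝ] (Fin 3 → ℝ) →ₗ[ℝ] (Fin 3 → ℝ) →ₗ[ℝ] (Fin 3 → ℝ))
    (e : Fin 3 → (Fin 3 → ℝ)) (he : ∀ i : Fin 3, e i = Pi.single i 1)
    (hf : ∀ i j k : Fin 3,
      f (e i) (e j) (e k) =
        if i = 0 ∧ j = 0 ∧ k = 0 then b • e 1 + a • e 2
        else if i = 0 ∧ j = 0 ∧ k = 1 then b • e 2
        else 0) :
    ∀ x1 x2 y1 y2 y3 : Fin 3 → ℝ,
      f x1 x2 (f y1 y2 y3) =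
        f (f x1 x2 y1) y2 y3 + f y1 (f x1 x2 y2) y3 + f y1 y2 (f x1 x2 y3) :=
  example_third_3Leibniz_dim3_general a b f e he hf
end

section
/- Let (A, γ) be a 3-Lie bialgebra over a field, i.e., A is a finite-dimensional 3-Lie algebra and γ: A → A^{⊗3} is a 1-cocycle (γ[y1,y2,y3] = ad^{(3)}_{(y2,y3,ŷ1)}γ(y1) + ad^{(3)}_{(y3,y1,ŷ2)}γ(y2) + ad^{(3)}_{(y1,y2,ŷ3)}γ(y3)) whose transpose γᵗ: (A*)^{⊗3} → A* defines a 3-Lie bracket on A*. Then, letting μ: A^{⊗3} → A denote the bracket of A, the transpose μᵗ: A* → (A*)^{⊗3} is a 1-cocycle for the 3-Lie algebra A* with respect to its coadjoint-type diagonal action; hence (A*, μᵗ) is a 3-Lie bialgebra. -/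
open TensorProduct

section Defs

variable {K A : Type*} [Field K] [AddCommGroup A] [Module K A]

/-- The diagonal action `g⊗1⊗1 + 1⊗g⊗1 + 1⊗1⊗g` on `A ⊗ A ⊗ A`. -/
noncomputable def diag3 (g : A →ₗ[K] A) :
    (A ⊗[K] (A ⊗[K] A)) →ₗ[K] (A ⊗[K] (A ⊗[K] A)) :=
  TensorProduct.map g LinearMap.id
    + TensorProduct.map LinearMap.id (TensorProduct.map g LinearMap.id)
    + TensorProduct.map LinearMap.id (TensorProduct.map LinearMap.id g)

/-- Contraction `b ⊗ c ↦ ξ(b) • c`. -/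
noncomputable def cmap (ξ : Module.Dual K A) : (A ⊗[K] A) →ₗ[K] A :=
  TensorProduct.lift ((LinearMap.lsmul K A).comp ξ)

/-- Pairing `b ⊗ c ↦ ξ2(b) * ξ3(c)`. -/
noncomputable def pairD (ξ2 ξ3 : Module.Dual K A) : (A ⊗[K] A) →ₗ[K] K :=
  TensorProduct.lift (ξ2.smulRight ξ3)

/-- The pairing of `ξ1 ⊗ ξ2 ⊗ ξ3` with `A ⊗ A ⊗ A`:
`a ⊗ b ⊗ c ↦ ξ1(a) * ξ2(b) * ξ3(c)`. -/
noncomputable def trip (ξ1 ξ2 ξ3 : Module.Dual K A) :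
    (A ⊗[K] (A ⊗[K] A)) →ₗ[K] K :=
  TensorProduct.lift (ξ1.smulRight (pairD ξ2 ξ3))

/-- Contraction of the first two tensor factors:
`a ⊗ b ⊗ c ↦ ξ2(a) • ξ3(b) • c`. -/
noncomputable def contract2 (ξ2 ξ3 : Module.Dual K A) :
    (A ⊗[K] (A ⊗[K] A)) →ₗ[K] A :=
  TensorProduct.lift (ξ2.smulRight (cmap ξ3))

/-- The bracket on `A*` defined by the cocommutator `γ` via
`⟨[ξ1,ξ2,ξ3]_*, x⟩ = ⟨ξ1 ⊗ ξ2 ⊗ ξ3, γ(x)⟩`. -/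
noncomputable def fstar (γ : A →ₗ[K] A ⊗[K] (A ⊗[K] A))
    (ξ1 ξ2 ξ3 : Module.Dual K A) : Module.Dual K A :=
  (trip ξ1 ξ2 ξ3).comp γ

/-- The transpose of the coadjoint action `η ↦ [ξ2, ξ3, η]_*` on `A*`, i.e. the
map `x ↦ (ξ2 ⊗ ξ3 ⊗ 1)(γ(x))`, satisfying `⟨[ξ2,ξ3,η]_*, x⟩ = ⟨η, coad ξ2 ξ3 x⟩`. -/
noncomputable def coad (γ : A →ₗ[K] A ⊗[K] (A ⊗[K] A))
    (ξ2 ξ3 : Module.Dual K A) : A →ₗ[K] A :=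
  (contract2 ξ2 ξ3).comp γ

end Defs

/-!
Pair the cocycle identity for `γ` at `[x1, x2, x3]` with `ξ1 ⊗ ξ2 ⊗ ξ3`. Each of the nine
resulting terms has one `ξi` composed with a bracket `[xj, xk, ·]`; the transpose relation
`⟨[ξ2, ξ3, η]_*, x⟩ = ⟨η, coad ξ2 ξ3 x⟩` together with the cyclic symmetry of both brackets
turns it into the matching term of the dual cocycle identity.
-/

section Lemmas

variable {K A : Type*} [Field K] [AddCommGroup A] [Module K A]

theorem cyclic_of_alternating {M N : Type*} [Add M] [AddCommGroup N] (g : M → M → M → N)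
    (hadd_left : ∀ a b c d, g (a + b) c d = g a c d + g b c d)
    (hadd_middle : ∀ a b c d, g a (b + c) d = g a b d + g a c d)
    (hadd_right : ∀ a b c d, g a b (c + d) = g a b c + g a b d)
    (halt_left : ∀ x y, g x x y = 0) (halt_right : ∀ x y, g x y y = 0) (a b c : M) :
    g a b c = g b c a := by
  have swap_left : g a b c = -g b a c := by
    have h := halt_left (a + b) c
    rw [hadd_left, hadd_middle, hadd_middle, halt_left, halt_left, zero_add, add_zero] at h
    exact eq_neg_of_add_eq_zero_left h
  have swap_right : g b a c = -g b c a := by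
    have h := halt_right b (a + c)
    rw [hadd_middle, hadd_right, hadd_right, halt_right, halt_right, zero_add, add_zero] at h
    exact eq_neg_of_add_eq_zero_left h
  rw [swap_left, swap_right, neg_neg]

@[simp]
theorem trip_tmul (ξ1 ξ2 ξ3 : Module.Dual K A) (a b c : A) :
    trip ξ1 ξ2 ξ3 (a ⊗ₜ[K] (b ⊗ₜ[K] c)) = ξ1 a * (ξ2 b * ξ3 c) := by
  simp [trip, pairD]

theorem trip_add_left (ξ ξ' ξ2 ξ3 : Module.Dual K A) :
    trip (ξ + ξ') ξ2 ξ3 = trip ξ ξ2 ξ3 + trip ξ' ξ2 ξ3 := by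
  ext; simp [add_mul]

theorem trip_add_middle (ξ1 ξ ξ' ξ3 : Module.Dual K A) :
    trip ξ1 (ξ + ξ') ξ3 = trip ξ1 ξ ξ3 + trip ξ1 ξ' ξ3 := by
  ext; simp [add_mul, mul_add]

theorem trip_add_right (ξ1 ξ2 ξ ξ' : Module.Dual K A) :
    trip ξ1 ξ2 (ξ + ξ') = trip ξ1 ξ2 ξ + trip ξ1 ξ2 ξ' := by
  ext; simp [mul_add]

theorem trip_diag3 (ξ1 ξ2 ξ3 : Module.Dual K A) (g : A →ₗ[K] A) (t : A ⊗[K] (A ⊗[K] A)) :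
    trip ξ1 ξ2 ξ3 (diag3 g t) =
      trip (ξ1 ∘ₗ g) ξ2 ξ3 t + trip ξ1 (ξ2 ∘ₗ g) ξ3 t + trip ξ1 ξ2 (ξ3 ∘ₗ g) t := by
  have h : trip ξ1 ξ2 ξ3 ∘ₗ diag3 g =
      trip (ξ1 ∘ₗ g) ξ2 ξ3 + trip ξ1 (ξ2 ∘ₗ g) ξ3 + trip ξ1 ξ2 (ξ3 ∘ₗ g) := by
    ext; simp [diag3]
  exact LinearMap.congr_fun h t

theorem fstar_apply (γ : A →ₗ[K] A ⊗[K] (A ⊗[K] A)) (ξ1 ξ2 ξ3 : Module.Dual K A) (x : A) :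
    fstar γ ξ1 ξ2 ξ3 x = trip ξ1 ξ2 ξ3 (γ x) :=
  rfl

theorem cyclic_fstar (γ : A →ₗ[K] A ⊗[K] (A ⊗[K] A))
    (hsalt1 : ∀ ξ η : Module.Dual K A, fstar γ ξ ξ η = 0)
    (hsalt2 : ∀ ξ η : Module.Dual K A, fstar γ ξ η η = 0) (ξ1 ξ2 ξ3 : Module.Dual K A) :
    fstar γ ξ1 ξ2 ξ3 = fstar γ ξ2 ξ3 ξ1 :=
  cyclic_of_alternating (fstar γ)
    (fun _ _ _ _ => by simp only [fstar, trip_add_left, LinearMap.add_comp])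
    (fun _ _ _ _ => by simp only [fstar, trip_add_middle, LinearMap.add_comp])
    (fun _ _ _ _ => by simp only [fstar, trip_add_right, LinearMap.add_comp])
    hsalt1 hsalt2 ξ1 ξ2 ξ3

theorem apply_coad (γ : A →ₗ[K] A ⊗[K] (A ⊗[K] A)) (ξ2 ξ3 η : Module.Dual K A) (x : A) :
    η (coad γ ξ2 ξ3 x) = fstar γ ξ2 ξ3 η x := by
  have h : η ∘ₗ contract2 ξ2 ξ3 = trip ξ2 ξ3 η := by
    ext; simp [contract2, cmap]
  exact LinearMap.congr_fun h (γ x)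

theorem trip_diag3_apply_of_cyclic (γ : A →ₗ[K] A ⊗[K] (A ⊗[K] A))
    (hcyc : ∀ ξ1 ξ2 ξ3 : Module.Dual K A, fstar γ ξ1 ξ2 ξ3 = fstar γ ξ2 ξ3 ξ1)
    (ξ1 ξ2 ξ3 : Module.Dual K A) (g : A →ₗ[K] A) (x : A) :
    trip ξ1 ξ2 ξ3 (diag3 g (γ x)) =
      ξ1 (g (coad γ ξ2 ξ3 x)) + ξ2 (g (coad γ ξ3 ξ1 x)) + ξ3 (g (coad γ ξ1 ξ2 x)) := by
  simp only [trip_diag3, ← fstar_apply, ← LinearMap.comp_apply (g := g), apply_coad,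
    hcyc (ξ1 ∘ₗ g), hcyc ξ3 ξ1]

end Lemmas

theorem dual_of_3Lie_bialgebra_general
    {K A : Type*} [Field K] [AddCommGroup A] [Module K A]
    (f : A →ₗ[K] A →ₗ[K] A →ₗ[K] A)
    (halt1 : ∀ x y : A, f x x y = 0)
    (halt2 : ∀ x y : A, f x y y = 0)
    (γ : A →ₗ[K] A ⊗[K] (A ⊗[K] A))
    (hcoc : ∀ y1 y2 y3 : A,
      γ (f y1 y2 y3) =
        diag3 (f y2 y3) (γ y1) + diag3 (f y3 y1) (γ y2) + diag3 (f y1 y2) (γ y3))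
    (hsalt1 : ∀ ξ η : Module.Dual K A, fstar γ ξ ξ η = 0)
    (hsalt2 : ∀ ξ η : Module.Dual K A, fstar γ ξ η η = 0) :
    ∀ (ξ1 ξ2 ξ3 : Module.Dual K A) (x1 x2 x3 : A),
      fstar γ ξ1 ξ2 ξ3 (f x1 x2 x3) =
        (ξ1 (f (coad γ ξ2 ξ3 x1) x2 x3) + ξ1 (f x1 (coad γ ξ2 ξ3 x2) x3)
            + ξ1 (f x1 x2 (coad γ ξ2 ξ3 x3)))
        + (ξ2 (f (coad γ ξ3 ξ1 x1) x2 x3) + ξ2 (f x1 (coad γ ξ3 ξ1 x2) x3)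
            + ξ2 (f x1 x2 (coad γ ξ3 ξ1 x3)))
        + (ξ3 (f (coad γ ξ1 ξ2 x1) x2 x3) + ξ3 (f x1 (coad γ ξ1 ξ2 x2) x3)
            + ξ3 (f x1 x2 (coad γ ξ1 ξ2 x3))) := by
  intro ξ1 ξ2 ξ3 x1 x2 x3
  have hf : ∀ a b c : A, f a b c = f b c a :=
    cyclic_of_alternating (fun a b c => f a b c) (by simp) (by simp) (by simp) halt1 halt2
  have rotate_x1 : ∀ c, f x2 x3 c = f c x2 x3 := fun c => (hf c x2 x3).symm
  rw [fstar_apply, hcoc, map_add, map_add]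
  simp only [trip_diag3_apply_of_cyclic γ (cyclic_fstar γ hsalt1 hsalt2), rotate_x1, hf x3 x1]
  ring

/-- If `(A, γ)` is a finite-dimensional 3-Lie bialgebra (with `γ` a
1-cocycle whose transpose defines a 3-Lie bracket `fstar γ` on `A*`), then the
transpose `μᵗ` of the bracket `μ = f` of `A` is a 1-cocycle for the 3-Lie algebra
`A*` with respect to the coadjoint-type diagonal action; i.e. `(A*, μᵗ)` is a
3-Lie bialgebra.  The conclusion is the dual 1-cocycle condition expressed through
the natural pairing with `x1 ⊗ x2 ⊗ x3`. -/
theorem dual_of_3Lie_bialgebra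
    {K A : Type*} [Field K] [AddCommGroup A] [Module K A] [FiniteDimensional K A]
    (f : A →ₗ[K] A →ₗ[K] A →ₗ[K] A)
    (halt1 : ∀ x y : A, f x x y = 0)
    (halt2 : ∀ x y : A, f x y y = 0)
    (hfil : ∀ x1 x2 y1 y2 y3 : A,
      f x1 x2 (f y1 y2 y3) =
        f (f x1 x2 y1) y2 y3 + f y1 (f x1 x2 y2) y3 + f y1 y2 (f x1 x2 y3))
    (γ : A →ₗ[K] A ⊗[K] (A ⊗[K] A))
    (hcoc : ∀ y1 y2 y3 : A,
      γ (f y1 y2 y3) =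
        diag3 (f y2 y3) (γ y1) + diag3 (f y3 y1) (γ y2) + diag3 (f y1 y2) (γ y3))
    (hsalt1 : ∀ ξ η : Module.Dual K A, fstar γ ξ ξ η = 0)
    (hsalt2 : ∀ ξ η : Module.Dual K A, fstar γ ξ η η = 0)
    (hsfil : ∀ ξ1 ξ2 η1 η2 η3 : Module.Dual K A,
      fstar γ ξ1 ξ2 (fstar γ η1 η2 η3) =
        fstar γ (fstar γ ξ1 ξ2 η1) η2 η3 + fstar γ η1 (fstar γ ξ1 ξ2 η2) η3
          + fstar γ η1 η2 (fstar γ ξ1 ξ2 η3)) :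
    ∀ (ξ1 ξ2 ξ3 : Module.Dual K A) (x1 x2 x3 : A),
      fstar γ ξ1 ξ2 ξ3 (f x1 x2 x3) =
        (ξ1 (f (coad γ ξ2 ξ3 x1) x2 x3) + ξ1 (f x1 (coad γ ξ2 ξ3 x2) x3)
            + ξ1 (f x1 x2 (coad γ ξ2 ξ3 x3)))
        + (ξ2 (f (coad γ ξ3 ξ1 x1) x2 x3) + ξ2 (f x1 (coad γ ξ3 ξ1 x2) x3)
            + ξ2 (f x1 x2 (coad γ ξ3 ξ1 x3)))
        + (ξ3 (f (coad γ ξ1 ξ2 x1) x2 x3) + ξ3 (f x1 (coad γ ξ1 ξ2 x2) x3)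
            + ξ3 (f x1 x2 (coad γ ξ1 ξ2 x3))) :=
  dual_of_3Lie_bialgebra_general f halt1 halt2 γ hcoc hsalt1 hsalt2
end
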